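/- For the symmetric algebra A = S(V) with Koszul spaces W_p ⊆ V^{⊗p}, W_p equals the image of the antisymmetrization map Ant: V^{⊗p} → V^{⊗p}, Ant(v_1 ⊗ … ⊗ v_p) = Σ_{σ ∈ Σ_p} sgn(σ) v_{σ(1)} ⊗ … ⊗ v_{σ(p)}. -/

import Mathlib

/- STATEMENT 9: For the symmetric algebra `A = S(V) = T(V)/(R)`, where `R` is spanned by the
commutators `x⊗y − y⊗x`, the Koszul subspace `W_p ⊆ V^{⊗p}` equals the image of the
antisymmetrization map `Ant(v_1 ⊗ … ⊗ v_p) = Σ_{σ ∈ Σ_p} sgn(σ) v_{σ(1)} ⊗ … ⊗ v_{σ(p)}`. -/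

open TensorProduct PiTensorProduct


open TensorProduct PiTensorProduct

variable (k : Type*) [Field k] (V : Type*) [AddCommGroup V] [Module k V]

/-- The canonical equivalence `V^{⊗i} ⊗ V^{⊗j} ≃ V^{⊗(i+j)}`. -/
noncomputable def tpMul (i j : ℕ) : ((⨂[k]^i V) ⊗[k] (⨂[k]^j V)) ≃ₗ[k] ⨂[k]^(i + j) V :=
  (PiTensorProduct.tmulEquiv (ι := Fin i) (ι₂ := Fin j) k V).trans
    (PiTensorProduct.reindex k (fun _ => V) finSumFinEquiv)

variable {k V}

/-- The subspace `S ⊗ T` of `V^{⊗(i+j)}` attached to subspaces `S ⊆ V^{⊗i}`, `T ⊆ V^{⊗j}`. -/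
noncomputable def sprod {i j : ℕ} (S : Submodule k (⨂[k]^i V)) (T : Submodule k (⨂[k]^j V)) :
    Submodule k (⨂[k]^(i + j) V) :=
  Submodule.map (tpMul k V i j).toLinearMap (Submodule.map₂ (TensorProduct.mk k _ _) S T)

/-- Transport of subspaces of tensor powers along an equality of exponents. -/
noncomputable def scast {i j : ℕ} (h : i = j) (S : Submodule k (⨂[k]^i V)) :
    Submodule k (⨂[k]^j V) :=
  Submodule.map (PiTensorProduct.reindex k (fun _ => V) (finCongr h)).toLinearMap S

/-- The identification `V^{⊗1} ≃ V`. -/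
noncomputable def e1 : (⨂[k]^1 V) ≃ₗ[k] V := PiTensorProduct.subsingletonEquiv (0 : Fin 1)

/-- The identification `V^{⊗2} ≃ V ⊗ V`. -/
noncomputable def e2 : (⨂[k]^2 V) ≃ₗ[k] (V ⊗[k] V) :=
  (tpMul k V 1 1).symm.trans (TensorProduct.congr e1 e1)

/-- The Koszul subspaces `W p = ⋂_{i+2+j=p} V^{⊗i} ⊗ R ⊗ V^{⊗j}`; the intersection is empty
for `p = 0, 1`, so `W 0` and `W 1` are the whole ambient spaces (`k` resp. `V`). -/
noncomputable def W (R : Submodule k (V ⊗[k] V)) (p : ℕ) : Submodule k (⨂[k]^p V) :=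
  ⨅ (i : ℕ), ⨅ (j : ℕ), ⨅ (_ : i + 2 + j = p),
    scast (show i + (2 + j) = p by omega)
      (sprod (⊤ : Submodule k (⨂[k]^i V))
        (sprod (Submodule.map (e2 (k := k) (V := V)).symm.toLinearMap R)
          (⊤ : Submodule k (⨂[k]^j V))))


variable (k V)

/-- The antisymmetrization map `V^{⊗p} → V^{⊗p}`,
`v_1 ⊗ … ⊗ v_p ↦ Σ_{σ ∈ Σ_p} sgn(σ) v_{σ(1)} ⊗ … ⊗ v_{σ(p)}`. -/
noncomputable def Ant (p : ℕ) : (⨂[k]^p V) →ₗ[k] ⨂[k]^p V :=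
  ∑ σ : Equiv.Perm (Fin p),
    (((Equiv.Perm.sign σ : ℤ) : k) •
      (PiTensorProduct.reindex k (fun _ : Fin p => V) σ).toLinearMap)

/-- The relation subspace of the symmetric algebra: the span of the commutators. -/
noncomputable def Rsym : Submodule k (V ⊗[k] V) :=
  Submodule.span k {z | ∃ x y : V, z = x ⊗ₜ[k] y - y ⊗ₜ[k] x}

/-
Let `τᵢ` act on `V^{⊗p}` by exchanging the tensor factors `i` and `i+1`. The factor
`V^{⊗i} ⊗ R ⊗ V^{⊗j}` of `W_p` is exactly the image of `1 - τᵢ`, so `W_p = ⋂ᵢ range (1 - τᵢ)`.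
For any odd permutation `s`, `Ant = (1 - s) ∘ Σ_{σ even} σ`; hence `range Ant ⊆ W_p`.
Conversely, expand `z ∈ W_p` in the basis `b_{w 1} ⊗ ⋯ ⊗ b_{w p}` built from a basis of `V`
indexed by a linearly ordered set. Membership in `range (1 - τᵢ)` forces the coordinates `c`
to satisfy `c (w ∘ τᵢ) = -c w`, and `c w = 0` whenever `w ∘ τᵢ = w`. Hence
`c (w ∘ σ) = sgn σ • c w` for all `σ`, and `c w = 0` unless `w` is injective (sort `w` to find
two equal neighbours). So `z = Ant y`, where `y` keeps only the coordinates of `z` at strictly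
increasing `w`. Nothing is divided by `p!`, so the argument works in every characteristic.
-/

open Equiv

attribute [local ext] PiTensorProduct.ext

lemma Fin.append_append_comp_swap {α : Type*} {i j : ℕ} (u : Fin i → α) (g : Fin 2 → α)
    (v : Fin j → α) :
    Fin.append u (Fin.append (g ∘ swap 0 1) v) =
      Fin.append u (Fin.append g v) ∘
        swap (Fin.natAdd i (Fin.castAdd j 0)) (Fin.natAdd i (Fin.castAdd j 1)) := by
  funext x
  refine Fin.addCases (fun a => ?_) (fun y => Fin.addCases (fun b => ?_) (fun c => ?_) y) x
  · rw [Function.comp_apply, swap_apply_of_ne_of_ne (by simp [Fin.ext_iff]; omega)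
      (by simp [Fin.ext_iff]; omega)]
    simp
  · fin_cases b <;> simp
  · rw [Function.comp_apply, swap_apply_of_ne_of_ne (by simp [Fin.ext_iff])
      (by simp [Fin.ext_iff]; omega)]
    simp

lemma Fin.exists_castSucc_eq_succ_of_monotone {n : ℕ} {α : Type*} [PartialOrder α]
    {f : Fin (n + 1) → α} (hf : Monotone f) (hinj : ¬ Function.Injective f) :
    ∃ i : Fin n, f i.castSucc = f i.succ := by
  by_contra! h
  exact hinj (Fin.strictMono_iff_lt_succ.2 fun i =>
    (hf Fin.castSucc_lt_succ.le).lt_of_ne (h i)).injective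

lemma Equiv.comp_swap_eq_self {α β : Type*} [DecidableEq α] {f : α → β} {a b : α}
    (h : f a = f b) : f ∘ swap a b = f := by
  funext x
  rw [Function.comp_apply, swap_apply_def]
  split_ifs with hxa hxb
  · rw [hxa, h]
  · rw [hxb, h]
  · rfl

lemma Int.cast_units_mul_self {R : Type*} [Ring R] (u : ℤˣ) :
    ((u : ℤ) : R) * ((u : ℤ) : R) = 1 := by
  rw [← Int.cast_mul, Int.units_coe_mul_self, Int.cast_one]

def adjSwap {p : ℕ} (i : ℕ) (h : i + 1 < p) : Perm (Fin p) := swap ⟨i, by omega⟩ ⟨i + 1, h⟩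

section PermTensor

variable (R M : Type*) [CommSemiring R] [AddCommMonoid M] [Module R M] {ι κ : Type*}

noncomputable def permTensor : Perm κ →* Module.End R (⨂[R] _ : κ, M) where
  toFun σ := (reindex R (fun _ => M) σ).toLinearMap
  map_one' := congrArg LinearEquiv.toLinearMap (reindex_refl (R := R) (s := fun _ : κ => M))
  map_mul' σ τ := congrArg LinearEquiv.toLinearMap (reindex_trans τ σ).symm

variable {R M}

@[simp]
lemma permTensor_tprod (σ : Perm κ) (f : κ → M) :
    permTensor R M σ (tprod R f) = tprod R (f ∘ ⇑σ⁻¹) :=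
  reindex_tprod σ f

lemma repr_permTensor [Fintype κ] (b : Module.Basis ι R M) (σ : Perm κ) (x : ⨂[R] _ : κ, M)
    (w : κ → ι) :
    (Basis.piTensorProduct fun _ => b).repr (permTensor R M σ x) w =
      (Basis.piTensorProduct fun _ => b).repr x (w ∘ σ) := by
  induction x using PiTensorProduct.induction_on with
  | smul_tprod r f =>
    simp only [map_smul, Finsupp.smul_apply, permTensor_tprod,
      Basis.piTensorProduct_repr_tprod_apply]
    rw [← Equiv.prod_comp σ]
    congr 1
    refine Finset.prod_congr rfl fun a _ => ?_
    rw [Function.comp_apply, Perm.inv_eq_iff_eq.2 rfl]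
    rfl
  | add x y hx hy => simp only [map_add, Finsupp.add_apply, hx, hy]

end PermTensor

section OneSubPermTensor

variable {R M ι κ : Type*} [CommRing R] [AddCommGroup M] [Module R M] [Fintype κ]
  {b : Module.Basis ι R M} {s : Perm κ} {x : ⨂[R] _ : κ, M}

lemma repr_comp_eq_neg_of_mem_range (hs : s * s = 1)
    (hx : x ∈ LinearMap.range (1 - permTensor R M s)) (w : κ → ι) :
    (Basis.piTensorProduct fun _ => b).repr x (w ∘ s) =
      -(Basis.piTensorProduct fun _ => b).repr x w := by
  obtain ⟨y, rfl⟩ := hx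
  have hss : (w ∘ s) ∘ s = w := by
    rw [Function.comp_assoc, ← Perm.coe_mul, hs, Perm.coe_one, Function.comp_id]
  simp only [LinearMap.sub_apply, Module.End.one_apply, map_sub, Finsupp.sub_apply,
    repr_permTensor, hss]
  ring

lemma repr_eq_zero_of_mem_range (hx : x ∈ LinearMap.range (1 - permTensor R M s)) {w : κ → ι}
    (hw : w ∘ s = w) :
    (Basis.piTensorProduct fun _ => b).repr x w = 0 := by
  obtain ⟨y, rfl⟩ := hx
  simp only [LinearMap.sub_apply, Module.End.one_apply, map_sub, Finsupp.sub_apply,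
    repr_permTensor, hw, sub_self]

end OneSubPermTensor

section Koszul

variable {k V}
variable {M N : Type*} [AddCommMonoid M] [Module k M] [AddCommMonoid N] [Module k N]

lemma tpMul_tprod (m n : ℕ) (f : Fin m → V) (g : Fin n → V) :
    tpMul k V m n (tprod k f ⊗ₜ tprod k g) = tprod k (Fin.append f g) :=
  TensorPower.tprod_mul_tprod (R := k) f g

lemma e2_symm_tmul (x y : V) : (e2 (k := k) (V := V)).symm (x ⊗ₜ y) = tprod k ![x, y] := by
  have h : tprod k ![x, y] = tpMul k V 1 1 (tprod k (fun _ => x) ⊗ₜ tprod k (fun _ => y)) := by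
    rw [tpMul_tprod]
    congr 1
    funext a
    fin_cases a <;> rfl
  rw [LinearEquiv.symm_apply_eq, e2, LinearEquiv.trans_apply, h, LinearEquiv.symm_apply_apply,
    TensorProduct.congr_tmul, e1, subsingletonEquiv_apply_tprod, subsingletonEquiv_apply_tprod]

lemma map_e2_symm_Rsym :
    (Rsym k V).map (e2 (k := k) (V := V)).symm.toLinearMap =
      LinearMap.range (1 - permTensor k V (swap (0 : Fin 2) 1)) := by
  have hgen : ∀ x y : V, (1 - permTensor k V (swap (0 : Fin 2) 1)) (tprod k ![x, y]) =
      (e2 (k := k) (V := V)).symm (x ⊗ₜ y - y ⊗ₜ x) := by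
    intro x y
    rw [map_sub, e2_symm_tmul, e2_symm_tmul, LinearMap.sub_apply, permTensor_tprod]
    congr 2
    funext a
    fin_cases a <;> rfl
  rw [Rsym, Submodule.map_span, LinearMap.range_eq_map, ← span_tprod_eq_top, Submodule.map_span]
  congr 1
  ext t
  constructor
  · rintro ⟨_, ⟨x, y, rfl⟩, rfl⟩
    exact ⟨_, ⟨![x, y], rfl⟩, hgen x y⟩
  · rintro ⟨_, ⟨g, rfl⟩, rfl⟩
    refine ⟨_, ⟨g 0, g 1, rfl⟩, ?_⟩
    rw [LinearEquiv.coe_coe, ← hgen]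
    congr 2
    funext a
    fin_cases a <;> rfl

lemma sprod_range_range {i j : ℕ} (f : M →ₗ[k] ⨂[k]^i V) (g : N →ₗ[k] ⨂[k]^j V) :
    sprod (LinearMap.range f) (LinearMap.range g) =
      LinearMap.range ((tpMul k V i j).toLinearMap ∘ₗ TensorProduct.map f g) := by
  rw [sprod, ← TensorProduct.range_map, LinearMap.range_comp]

lemma scast_range {i j : ℕ} (h : i = j) (f : M →ₗ[k] ⨂[k]^i V) :
    scast h (LinearMap.range f) =
      LinearMap.range ((reindex k (fun _ => V) (finCongr h)).toLinearMap ∘ₗ f) :=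
  (LinearMap.range_comp _ _).symm

lemma scast_sprod_Rsym_eq_range {p i j : ℕ} (h : i + 2 + j = p) :
    scast (show i + (2 + j) = p by omega) (sprod (⊤ : Submodule k (⨂[k]^i V))
        (sprod ((Rsym k V).map (e2 (k := k) (V := V)).symm.toLinearMap)
          (⊤ : Submodule k (⨂[k]^j V)))) =
      LinearMap.range (1 - permTensor k V (adjSwap i (by omega : i + 1 < p))) := by
  rw [map_e2_symm_Rsym, ← LinearMap.range_id (R := k) (M := ⨂[k]^j V), sprod_range_range,
    ← LinearMap.range_id (R := k) (M := ⨂[k]^i V), sprod_range_range, scast_range]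
  set Ψ := (reindex k (fun _ => V) (finCongr (show i + (2 + j) = p by omega))).toLinearMap ∘ₗ
    (tpMul k V i (2 + j)).toLinearMap ∘ₗ TensorProduct.map LinearMap.id (tpMul k V 2 j).toLinearMap
  have hΨ : LinearMap.range Ψ = ⊤ := by
    rw [LinearMap.range_eq_top]
    exact (reindex k _ _).surjective.comp ((tpMul k V i (2 + j)).surjective.comp
      (TensorProduct.map_surjective Function.surjective_id (tpMul k V 2 j).surjective))
  rw [← LinearMap.range_comp_of_range_eq_top _ hΨ]
  congr 1
  ext u g v
  simp only [LinearMap.compMultilinearMap_apply, AlgebraTensorModule.curry_apply,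
    LinearMap.restrictScalars_self, TensorProduct.curry_apply, LinearMap.coe_comp,
    LinearEquiv.coe_coe, Function.comp_apply, map_tmul, LinearMap.id_apply, LinearMap.sub_apply,
    Module.End.one_apply, permTensor_tprod, swap_inv, TensorProduct.sub_tmul,
    TensorProduct.tmul_sub, map_sub, tpMul_tprod, reindex_tprod, Fin.append_append_comp_swap, Ψ]
  congr 2
  funext x
  simp only [Function.comp_apply, finCongr_symm, finCongr_apply]
  congr 1
  rw [adjSwap, swap_inv, swap_apply_def, swap_apply_def]
  split_ifs <;> simp only [Fin.ext_iff, Fin.val_cast, Fin.val_natAdd, Fin.val_castAdd] at * <;>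
    simp only [Fin.isValue, Fin.val_zero, Fin.val_one] at * <;> omega

lemma mem_W_Rsym_iff {p : ℕ} {z : ⨂[k]^p V} :
    z ∈ W (Rsym k V) p ↔
      ∀ i (h : i + 1 < p), z ∈ LinearMap.range (1 - permTensor k V (adjSwap i h)) := by
  simp only [W, Submodule.mem_iInf]
  refine ⟨fun H i hi => ?_, fun H i j h => ?_⟩
  · have h : i + 2 + (p - i - 2) = p := by omega
    simpa only [scast_sprod_Rsym_eq_range h] using H i _ h
  · rw [scast_sprod_Rsym_eq_range h]
    exact H i _

end Koszul

section Antisymmetrization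

variable {k V} {ι : Type*} {b : Module.Basis ι k V} {p : ℕ}

lemma Ant_eq_sum :
    Ant k V p = ∑ σ : Perm (Fin p), ((Perm.sign σ : ℤ) : k) • permTensor k V σ :=
  rfl

lemma Ant_eq_one_sub_mul (s : Perm (Fin p)) (hs : Perm.sign s = -1) :
    Ant k V p = (1 - permTensor k V s) *
      ∑ σ ∈ Finset.univ.filter (fun σ => Perm.sign σ = 1), permTensor k V σ := by
  have hodd : ∑ σ ∈ Finset.univ.filter (fun σ => Perm.sign σ = 1), permTensor k V (s * σ) =
      ∑ σ ∈ Finset.univ.filter (fun σ => ¬ Perm.sign σ = 1), permTensor k V σ :=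
    Finset.sum_equiv (Equiv.mulLeft s) (by simp [hs, Int.units_ne_iff_eq_neg]) (by simp)
  rw [sub_mul, one_mul, Finset.mul_sum]
  simp only [← map_mul, hodd]
  rw [Ant_eq_sum, ← Finset.sum_filter_add_sum_filter_not Finset.univ (fun σ => Perm.sign σ = 1),
    sub_eq_add_neg, ← Finset.sum_neg_distrib]
  congr 1 <;> refine Finset.sum_congr rfl fun σ hσ => ?_
  · simp [(Finset.mem_filter.1 hσ).2]
  · rw [Int.units_ne_iff_eq_neg.1 (Finset.mem_filter.1 hσ).2, Units.val_neg, Units.val_one,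
      Int.cast_neg, Int.cast_one]
    exact neg_one_smul k (permTensor k V σ)

lemma range_Ant_le_W : LinearMap.range (Ant k V p) ≤ W (Rsym k V) p := by
  rintro _ ⟨x, rfl⟩
  refine mem_W_Rsym_iff.2 fun i hi => ?_
  rw [Ant_eq_one_sub_mul (adjSwap i hi) (Perm.sign_swap (by simp [Fin.ext_iff])),
    Module.End.mul_apply]
  exact LinearMap.mem_range_self _ _

lemma repr_Ant (x : ⨂[k]^p V) (w : Fin p → ι) :
    (Basis.piTensorProduct fun _ => b).repr (Ant k V p x) w =
      ∑ σ : Perm (Fin p), ((Perm.sign σ : ℤ) : k) *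
        (Basis.piTensorProduct fun _ => b).repr x (w ∘ σ) := by
  rw [Ant_eq_sum, LinearMap.sum_apply, map_sum, Finsupp.finsetSum_apply]
  refine Finset.sum_congr rfl fun σ _ => ?_
  rw [LinearMap.smul_apply, map_smul, Finsupp.smul_apply, smul_eq_mul, repr_permTensor]

lemma repr_comp_perm_of_mem_W {z : ⨂[k]^p V} (hz : z ∈ W (Rsym k V) p) (σ : Perm (Fin p))
    (w : Fin p → ι) :
    (Basis.piTensorProduct fun _ => b).repr z (w ∘ σ) =
      ((Perm.sign σ : ℤ) : k) * (Basis.piTensorProduct fun _ => b).repr z w := by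
  cases p with
  | zero => simp [Subsingleton.elim σ 1]
  | succ n =>
    have hσ : σ ∈ Submonoid.closure (Set.range fun i : Fin n => swap i.castSucc i.succ) := by
      rw [Perm.mclosure_swap_castSucc_succ]
      exact Submonoid.mem_top σ
    induction hσ using Submonoid.closure_induction generalizing w with
    | mem _ hs =>
      obtain ⟨i, rfl⟩ := hs
      dsimp only
      rw [Perm.sign_swap Fin.castSucc_lt_succ.ne]
      exact (repr_comp_eq_neg_of_mem_range (swap_mul_self _ _)
        (mem_W_Rsym_iff.1 hz i (by omega)) w).trans (by simp)
    | one => simp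
    | mul σ τ _ _ hσ hτ =>
      rw [Perm.coe_mul, ← Function.comp_assoc, hτ, hσ, Perm.sign_mul, Units.val_mul,
        Int.cast_mul]
      ring

lemma repr_eq_zero_of_mem_W_of_not_injective [LinearOrder ι] {z : ⨂[k]^p V}
    (hz : z ∈ W (Rsym k V) p) {w : Fin p → ι} (hw : ¬ Function.Injective w) :
    (Basis.piTensorProduct fun _ => b).repr z w = 0 := by
  cases p with
  | zero => exact absurd (Function.injective_of_subsingleton w) hw
  | succ n =>
    set σ := Tuple.sort w
    obtain ⟨i, hi⟩ := Fin.exists_castSucc_eq_succ_of_monotone (Tuple.monotone_sort w)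
      fun h => hw (by simpa using h.comp σ.symm.injective)
    have hsorted : (Basis.piTensorProduct fun _ => b).repr z (w ∘ σ) = 0 :=
      repr_eq_zero_of_mem_range (mem_W_Rsym_iff.1 hz i (by omega)) (comp_swap_eq_self hi)
    rw [repr_comp_perm_of_mem_W hz] at hsorted
    exact (mul_eq_zero.1 hsorted).resolve_left
      (left_ne_zero_of_mul_eq_one (Int.cast_units_mul_self _))

lemma Ant_repr_symm_filter_strictMono [LinearOrder ι] {z : ⨂[k]^p V}
    (hz : z ∈ W (Rsym k V) p) :
    Ant k V p ((Basis.piTensorProduct fun _ => b).repr.symm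
      (((Basis.piTensorProduct fun _ => b).repr z).filter StrictMono)) = z := by
  refine (Basis.piTensorProduct fun _ => b).repr.injective (Finsupp.ext fun w => ?_)
  rw [repr_Ant]
  simp only [LinearEquiv.apply_symm_apply, Finsupp.filter_apply]
  -- only the sorting permutation of `w` can make `w ∘ σ` strictly increasing
  rw [Finset.sum_eq_single (Tuple.sort w) ?_ (by simp)]
  · by_cases hinj : Function.Injective w
    · rw [if_pos ((Tuple.monotone_sort w).strictMono_of_injective
        (hinj.comp (Tuple.sort w).injective)), repr_comp_perm_of_mem_W hz, ← mul_assoc,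
        Int.cast_units_mul_self, one_mul]
    · rw [if_neg fun h => hinj (by simpa using h.injective.comp (Tuple.sort w).symm.injective),
        mul_zero, repr_eq_zero_of_mem_W_of_not_injective hz hinj]
  · intro σ _ hσ
    rw [if_neg fun h => hσ (Tuple.eq_sort_iff.2
      ⟨h.monotone, fun i j hij he => absurd he (h hij).ne⟩), mul_zero]

lemma W_le_range_Ant : W (Rsym k V) p ≤ LinearMap.range (Ant k V p) := by
  let : LinearOrder (Module.Basis.ofVectorSpaceIndex k V) :=
    IsWellOrder.linearOrder WellOrderingRel
  exact fun z hz => ⟨_, Ant_repr_symm_filter_strictMono (b := Module.Basis.ofVectorSpace k V) hz⟩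

end Antisymmetrization

/-- `W_p` is the image of the antisymmetrization map, for the symmetric algebra. -/
theorem W_symmetricAlgebra_eq_range_Ant (p : ℕ) :
    W (Rsym k V) p = LinearMap.range (Ant k V p) :=
  le_antisymm W_le_range_Ant range_Ant_le_W
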